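/- arXiv:1709.06137 — 5 statements merged into one kernel-verified Lean document; each statement's English description precedes it below -/
import Mathlib

section
/- Suppose g is strictly convex on ℝ and, for each j ∈ D, c_j is strictly convex on the interval [lo_j, hi_j]. Then the GFC feasible set K is a convex subset of ℝ × ℝ^D × ℝ^N, and the GFC objective f(s, d, ω) = g(s) + Σ_{j∈D} c_j(d_j) + Σ_{j∈N} (w_j/2) ω_j² is strictly convex on K. -/
open Finset

/-- The GFC feasible set: triples `(s, d, ω)` with `s = ∑_{j ∈ D} a_j d_j - b`,
power balance `∑_{j ∈ N} (p_j - w_j ω_j) - ∑_{j ∈ D} d_j = 0`, and box constraints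
`lo_j ≤ d_j ≤ hi_j` for `j ∈ D`.  The bus set `N` is the whole (finite) type `ι`. -/
def gfcK {ι : Type*} [Fintype ι] (D : Finset ι) (w p a lo hi : ι → ℝ) (b : ℝ) :
    Set (ℝ × ({j // j ∈ D} → ℝ) × (ι → ℝ)) :=
  {x | x.1 = (∑ j : {j // j ∈ D}, a j.1 * x.2.1 j) - b ∧
       (∑ j : ι, (p j - w j * x.2.2 j)) - (∑ j : {j // j ∈ D}, x.2.1 j) = 0 ∧
       ∀ j : {j // j ∈ D}, lo j.1 ≤ x.2.1 j ∧ x.2.1 j ≤ hi j.1}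

/-- The GFC objective `f(s, d, ω) = g(s) + ∑_{j ∈ D} c_j(d_j) + ∑_{j ∈ N} (w_j/2) ω_j²`. -/
noncomputable def gfcF {ι : Type*} [Fintype ι] (D : Finset ι) (w : ι → ℝ) (c : ι → ℝ → ℝ) (g : ℝ → ℝ) :
    ℝ × ({j // j ∈ D} → ℝ) × (ι → ℝ) → ℝ :=
  fun x => g x.1 + (∑ j : {j // j ∈ D}, c j.1 (x.2.1 j)) + ∑ j : ι, (w j / 2) * (x.2.2 j) ^ 2

/-- Key algebraic identity for the quadratic term. -/
lemma quad_combo (w t₁ t₂ u v : ℝ) (hts : t₁ + t₂ = 1) :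
    t₁ * (w / 2 * u ^ 2) + t₂ * (w / 2 * v ^ 2) - w / 2 * (t₁ * u + t₂ * v) ^ 2
      = w / 2 * t₁ * t₂ * (u - v) ^ 2 := by
  have h : t₂ = 1 - t₁ := by linarith
  subst h; ring

/-- if `g` is strictly convex on `ℝ` and each `c_j` is strictly convex on
`[lo_j, hi_j]`, then the GFC feasible set is convex and the GFC objective is strictly
convex on it. -/
theorem gfc_convexity {ι : Type*} [Fintype ι] (D : Finset ι)
    (w p a lo hi : ι → ℝ) (b : ℝ) (c : ι → ℝ → ℝ) (g : ℝ → ℝ)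
    (hw : ∀ j : ι, 0 < w j) (ha : ∀ j ∈ D, 0 < a j) (hlohi : ∀ j ∈ D, lo j ≤ hi j)
    (hg : StrictConvexOn ℝ Set.univ g)
    (hc : ∀ j ∈ D, StrictConvexOn ℝ (Set.Icc (lo j) (hi j)) (c j)) :
    Convex ℝ (gfcK D w p a lo hi b) ∧
      StrictConvexOn ℝ (gfcK D w p a lo hi b) (gfcF D w c g) := by
  have hKconv : Convex ℝ (gfcK D w p a lo hi b) := by
    rintro x ⟨hx1, hx2, hx3⟩ y ⟨hy1, hy2, hy3⟩ t₁ t₂ ht₁ ht₂ hts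
    refine ⟨?_, ?_, ?_⟩
    · simp only [Prod.fst_add, Prod.smul_fst, Prod.snd_add, Prod.smul_snd, Pi.add_apply,
        Pi.smul_apply, smul_eq_mul]
      have key : ∑ j : {j // j ∈ D}, a j.1 * (t₁ * x.2.1 j + t₂ * y.2.1 j)
          = t₁ * ∑ j : {j // j ∈ D}, a j.1 * x.2.1 j
            + t₂ * ∑ j : {j // j ∈ D}, a j.1 * y.2.1 j := by
        rw [Finset.mul_sum, Finset.mul_sum, ← Finset.sum_add_distrib]
        exact Finset.sum_congr rfl fun j _ => by ring
      rw [key, hx1, hy1]; linear_combination (-b) * hts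
    · simp only [Prod.fst_add, Prod.smul_fst, Prod.snd_add, Prod.smul_snd, Pi.add_apply,
        Pi.smul_apply, smul_eq_mul]
      have key1 : ∑ j : ι, (p j - w j * (t₁ * x.2.2 j + t₂ * y.2.2 j))
          = t₁ * ∑ j : ι, (p j - w j * x.2.2 j) + t₂ * ∑ j : ι, (p j - w j * y.2.2 j) := by
        rw [Finset.mul_sum, Finset.mul_sum, ← Finset.sum_add_distrib]
        refine Finset.sum_congr rfl fun j _ => ?_
        linear_combination (-p j) * hts
      have key2 : ∑ j : {j // j ∈ D}, (t₁ * x.2.1 j + t₂ * y.2.1 j)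
          = t₁ * ∑ j : {j // j ∈ D}, x.2.1 j + t₂ * ∑ j : {j // j ∈ D}, y.2.1 j := by
        rw [Finset.mul_sum, Finset.mul_sum, ← Finset.sum_add_distrib]
      rw [key1, key2]
      linear_combination t₁ * hx2 + t₂ * hy2
    · intro j
      have := (convex_Icc (lo j.1) (hi j.1)) ⟨(hx3 j).1, (hx3 j).2⟩ ⟨(hy3 j).1, (hy3 j).2⟩
        ht₁ ht₂ hts
      simpa only [Prod.snd_add, Prod.smul_snd, Prod.fst_add, Prod.smul_fst, Pi.add_apply,
        Pi.smul_apply, smul_eq_mul, Set.mem_Icc] using this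
  refine ⟨hKconv, hKconv, ?_⟩
  rintro x ⟨hx1, hx2, hx3⟩ y ⟨hy1, hy2, hy3⟩ hxy t₁ t₂ ht₁ ht₂ hts
  -- components of the combination
  simp only [gfcF, Prod.fst_add, Prod.smul_fst, Prod.snd_add, Prod.smul_snd, Pi.add_apply,
    Pi.smul_apply, smul_eq_mul]
  -- g part
  have hG : g (t₁ * x.1 + t₂ * y.1) ≤ t₁ * g x.1 + t₂ * g y.1 := by
    have := hg.convexOn.2 (Set.mem_univ x.1) (Set.mem_univ y.1) ht₁.le ht₂.le hts
    simpa using this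
  -- c parts
  have hCle : ∀ j : {j // j ∈ D}, c j.1 (t₁ * x.2.1 j + t₂ * y.2.1 j)
      ≤ t₁ * c j.1 (x.2.1 j) + t₂ * c j.1 (y.2.1 j) := by
    intro j
    have := (hc j.1 j.2).convexOn.2 (Set.mem_Icc.mpr (hx3 j)) (Set.mem_Icc.mpr (hy3 j))
      ht₁.le ht₂.le hts
    simpa using this
  -- quadratic parts
  have hQle : ∀ j : ι, w j / 2 * (t₁ * x.2.2 j + t₂ * y.2.2 j) ^ 2
      ≤ t₁ * (w j / 2 * (x.2.2 j) ^ 2) + t₂ * (w j / 2 * (y.2.2 j) ^ 2) := by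
    intro j
    have h := quad_combo (w j) t₁ t₂ (x.2.2 j) (y.2.2 j) hts
    have h0 : (0:ℝ) ≤ w j / 2 * t₁ * t₂ * (x.2.2 j - y.2.2 j) ^ 2 :=
      mul_nonneg (mul_nonneg (mul_nonneg (div_nonneg (hw j).le (by norm_num)) ht₁.le) ht₂.le)
        (sq_nonneg _)
    linarith
  -- sum rearrangement identities
  have hBsum : ∑ j : {j // j ∈ D}, (t₁ * c j.1 (x.2.1 j) + t₂ * c j.1 (y.2.1 j))
      = t₁ * ∑ j : {j // j ∈ D}, c j.1 (x.2.1 j) + t₂ * ∑ j : {j // j ∈ D}, c j.1 (y.2.1 j) := by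
    rw [Finset.sum_add_distrib, Finset.mul_sum, Finset.mul_sum]
  have hQsum : ∑ j : ι, (t₁ * (w j / 2 * (x.2.2 j) ^ 2) + t₂ * (w j / 2 * (y.2.2 j) ^ 2))
      = t₁ * ∑ j : ι, w j / 2 * (x.2.2 j) ^ 2 + t₂ * ∑ j : ι, w j / 2 * (y.2.2 j) ^ 2 := by
    rw [Finset.sum_add_distrib, Finset.mul_sum, Finset.mul_sum]
  have hCsumle : ∑ j : {j // j ∈ D}, c j.1 (t₁ * x.2.1 j + t₂ * y.2.1 j)
      ≤ ∑ j : {j // j ∈ D}, (t₁ * c j.1 (x.2.1 j) + t₂ * c j.1 (y.2.1 j)) :=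
    Finset.sum_le_sum fun j _ => hCle j
  have hQsumle : ∑ j : ι, w j / 2 * (t₁ * x.2.2 j + t₂ * y.2.2 j) ^ 2
      ≤ ∑ j : ι, (t₁ * (w j / 2 * (x.2.2 j) ^ 2) + t₂ * (w j / 2 * (y.2.2 j) ^ 2)) :=
    Finset.sum_le_sum fun j _ => hQle j
  -- case split on where x and y differ
  have hdo : x.2.1 ≠ y.2.1 ∨ x.2.2 ≠ y.2.2 := by
    by_contra h
    push_neg at h
    obtain ⟨h1, h2⟩ := h
    apply hxy
    have hs : x.1 = y.1 := by rw [hx1, hy1, h1]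
    exact Prod.ext hs (Prod.ext h1 h2)
  rcases hdo with hd | ho
  · -- strict inequality from some c_j
    obtain ⟨j₀, hj₀⟩ := Function.ne_iff.mp hd
    have hCstrict : ∑ j : {j // j ∈ D}, c j.1 (t₁ * x.2.1 j + t₂ * y.2.1 j)
        < ∑ j : {j // j ∈ D}, (t₁ * c j.1 (x.2.1 j) + t₂ * c j.1 (y.2.1 j)) := by
      refine Finset.sum_lt_sum (fun j _ => hCle j) ⟨j₀, Finset.mem_univ _, ?_⟩
      have := (hc j₀.1 j₀.2).2 (Set.mem_Icc.mpr (hx3 j₀)) (Set.mem_Icc.mpr (hy3 j₀))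
        hj₀ ht₁ ht₂ hts
      simpa using this
    rw [hBsum, hQsum] at *
    linarith
  · -- strict inequality from some quadratic term
    obtain ⟨j₀, hj₀⟩ := Function.ne_iff.mp ho
    have hQstrict : ∑ j : ι, w j / 2 * (t₁ * x.2.2 j + t₂ * y.2.2 j) ^ 2
        < ∑ j : ι, (t₁ * (w j / 2 * (x.2.2 j) ^ 2) + t₂ * (w j / 2 * (y.2.2 j) ^ 2)) := by
      refine Finset.sum_lt_sum (fun j _ => hQle j) ⟨j₀, Finset.mem_univ _, ?_⟩
      have h := quad_combo (w j₀) t₁ t₂ (x.2.2 j₀) (y.2.2 j₀) hts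
      have hsq : 0 < (x.2.2 j₀ - y.2.2 j₀) ^ 2 := by
        have : x.2.2 j₀ - y.2.2 j₀ ≠ 0 := sub_ne_zero.mpr hj₀
        positivity
      have h0 : (0:ℝ) < w j₀ / 2 * t₁ * t₂ * (x.2.2 j₀ - y.2.2 j₀) ^ 2 :=
        mul_pos (mul_pos (mul_pos (div_pos (hw j₀) (by norm_num)) ht₁) ht₂) hsq
      linarith
    rw [hBsum, hQsum] at *
    linarith
end

section
/- Suppose g is strictly convex on ℝ and, for each j ∈ D, c_j is strictly convex on the interval [lo_j, hi_j]. If (s, d, ω) and (s', d', ω') are both minimizers of the GFC objective f over the GFC feasible set K, then (s, d, ω) = (s', d', ω'); that is, the GFC problem has at most one optimal solution. -/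
open Finset

lemma mid_le_of_strictConvexOn {S : Set ℝ} {f : ℝ → ℝ} (h : StrictConvexOn ℝ S f)
    {u v : ℝ} (hu : u ∈ S) (hv : v ∈ S) : 2 * f ((u + v) / 2) ≤ f u + f v := by
  rcases eq_or_ne u v with rfl | hne
  · have : (u + u) / 2 = u := by ring
    rw [this]; linarith
  · have h2 := h.2 hu hv hne (by norm_num : (0:ℝ) < 1/2) (by norm_num : (0:ℝ) < 1/2)
      (by norm_num)
    simp only [smul_eq_mul] at h2
    have : (u + v) / 2 = 1/2 * u + 1/2 * v := by ring
    rw [this]; linarith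

lemma mid_lt_of_strictConvexOn {S : Set ℝ} {f : ℝ → ℝ} (h : StrictConvexOn ℝ S f)
    {u v : ℝ} (hu : u ∈ S) (hv : v ∈ S) (hne : u ≠ v) :
    2 * f ((u + v) / 2) < f u + f v := by
  have h2 := h.2 hu hv hne (by norm_num : (0:ℝ) < 1/2) (by norm_num : (0:ℝ) < 1/2)
    (by norm_num)
  simp only [smul_eq_mul] at h2
  have : (u + v) / 2 = 1/2 * u + 1/2 * v := by ring
  rw [this]; linarith


/-- if `g` is strictly convex on `ℝ` and each `c_j` is strictly convex on
`[lo_j, hi_j]`, then the GFC problem has at most one optimal solution. -/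
theorem gfc_unique_minimizer {ι : Type*} [Fintype ι] (D : Finset ι)
    (w p a lo hi : ι → ℝ) (b : ℝ) (c : ι → ℝ → ℝ) (g : ℝ → ℝ)
    (hw : ∀ j : ι, 0 < w j) (ha : ∀ j ∈ D, 0 < a j) (hlohi : ∀ j ∈ D, lo j ≤ hi j)
    (hg : StrictConvexOn ℝ Set.univ g)
    (hc : ∀ j ∈ D, StrictConvexOn ℝ (Set.Icc (lo j) (hi j)) (c j))
    (x y : ℝ × ({j // j ∈ D} → ℝ) × (ι → ℝ))
    (hx : x ∈ gfcK D w p a lo hi b) (hy : y ∈ gfcK D w p a lo hi b)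
    (hxmin : ∀ z ∈ gfcK D w p a lo hi b, gfcF D w c g x ≤ gfcF D w c g z)
    (hymin : ∀ z ∈ gfcK D w p a lo hi b, gfcF D w c g y ≤ gfcF D w c g z) :
    x = y := by
  by_contra hne
  obtain ⟨hx1, hx2, hx3⟩ := hx
  obtain ⟨hy1, hy2, hy3⟩ := hy
  -- the midpoint
  set m : ℝ × ({j // j ∈ D} → ℝ) × (ι → ℝ) :=
    ((x.1 + y.1) / 2, fun j => (x.2.1 j + y.2.1 j) / 2, fun j => (x.2.2 j + y.2.2 j) / 2)
    with hm
  -- midpoint is feasible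
  have hmK : m ∈ gfcK D w p a lo hi b := by
    refine ⟨?_, ?_, ?_⟩
    · have key : ∑ j : {j // j ∈ D}, a j.1 * ((x.2.1 j + y.2.1 j) / 2)
          = ((∑ j : {j // j ∈ D}, a j.1 * x.2.1 j) + ∑ j : {j // j ∈ D}, a j.1 * y.2.1 j) / 2 := by
        rw [← Finset.sum_add_distrib, Finset.sum_div]
        exact Finset.sum_congr rfl fun j _ => by ring
      show (x.1 + y.1) / 2 = _ - b
      rw [key]; rw [hx1, hy1]; ring
    · have k1 : ∑ j : ι, (p j - w j * ((x.2.2 j + y.2.2 j) / 2))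
          = ((∑ j : ι, (p j - w j * x.2.2 j)) + ∑ j : ι, (p j - w j * y.2.2 j)) / 2 := by
        rw [← Finset.sum_add_distrib, Finset.sum_div]
        exact Finset.sum_congr rfl fun j _ => by ring
      have k2 : ∑ j : {j // j ∈ D}, (x.2.1 j + y.2.1 j) / 2
          = ((∑ j : {j // j ∈ D}, x.2.1 j) + ∑ j : {j // j ∈ D}, y.2.1 j) / 2 := by
        rw [← Finset.sum_add_distrib, Finset.sum_div]
      show (∑ j : ι, (p j - w j * ((x.2.2 j + y.2.2 j) / 2)))
          - (∑ j : {j // j ∈ D}, (x.2.1 j + y.2.1 j) / 2) = 0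
      rw [k1, k2]; linarith
    · intro j
      obtain ⟨h1, h2⟩ := hx3 j
      obtain ⟨h3, h4⟩ := hy3 j
      exact ⟨by show lo j.1 ≤ (x.2.1 j + y.2.1 j) / 2; linarith,
             by show (x.2.1 j + y.2.1 j) / 2 ≤ hi j.1; linarith⟩
  have hfx := hxmin m hmK
  have hfy := hymin m hmK
  -- nonstrict group inequalities
  have hG : 2 * g m.1 ≤ g x.1 + g y.1 :=
    mid_le_of_strictConvexOn hg (Set.mem_univ _) (Set.mem_univ _)
  have hCterm : ∀ j : {j // j ∈ D},
      2 * c j.1 (m.2.1 j) ≤ c j.1 (x.2.1 j) + c j.1 (y.2.1 j) := fun j =>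
    mid_le_of_strictConvexOn (hc j.1 j.2) ⟨(hx3 j).1, (hx3 j).2⟩ ⟨(hy3 j).1, (hy3 j).2⟩
  have hC : 2 * (∑ j : {j // j ∈ D}, c j.1 (m.2.1 j))
      ≤ (∑ j : {j // j ∈ D}, c j.1 (x.2.1 j)) + ∑ j : {j // j ∈ D}, c j.1 (y.2.1 j) := by
    rw [Finset.mul_sum, ← Finset.sum_add_distrib]
    exact Finset.sum_le_sum fun j _ => hCterm j
  have hQterm : ∀ j : ι,
      2 * ((w j / 2) * (m.2.2 j) ^ 2) ≤ (w j / 2) * (x.2.2 j) ^ 2 + (w j / 2) * (y.2.2 j) ^ 2 := by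
    intro j
    have h1 : (0:ℝ) ≤ (x.2.2 j - y.2.2 j) ^ 2 := sq_nonneg _
    have h2 := (hw j).le
    show 2 * ((w j / 2) * ((x.2.2 j + y.2.2 j) / 2) ^ 2) ≤ _
    nlinarith [sq_nonneg (x.2.2 j - y.2.2 j)]
  have hQ : 2 * (∑ j : ι, (w j / 2) * (m.2.2 j) ^ 2)
      ≤ (∑ j : ι, (w j / 2) * (x.2.2 j) ^ 2) + ∑ j : ι, (w j / 2) * (y.2.2 j) ^ 2 := by
    rw [Finset.mul_sum, ← Finset.sum_add_distrib]
    exact Finset.sum_le_sum fun j _ => hQterm j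
  -- one strict inequality
  have hstrict : 2 * gfcF D w c g m < gfcF D w c g x + gfcF D w c g y := by
    have hcases : x.1 ≠ y.1 ∨ (∃ j : {j // j ∈ D}, x.2.1 j ≠ y.2.1 j) ∨
        (∃ j : ι, x.2.2 j ≠ y.2.2 j) := by
      by_contra h
      push_neg at h
      obtain ⟨h1, h2, h3⟩ := h
      exact hne (Prod.ext h1 (Prod.ext (funext h2) (funext h3)))
    simp only [gfcF]
    rcases hcases with h | ⟨j0, h⟩ | ⟨j0, h⟩
    · have := mid_lt_of_strictConvexOn hg (Set.mem_univ x.1) (Set.mem_univ y.1) h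
      linarith
    · have hC' : 2 * (∑ j : {j // j ∈ D}, c j.1 (m.2.1 j))
          < (∑ j : {j // j ∈ D}, c j.1 (x.2.1 j)) + ∑ j : {j // j ∈ D}, c j.1 (y.2.1 j) := by
        rw [Finset.mul_sum, ← Finset.sum_add_distrib]
        refine Finset.sum_lt_sum (fun j _ => hCterm j) ⟨j0, Finset.mem_univ _, ?_⟩
        exact mid_lt_of_strictConvexOn (hc j0.1 j0.2) ⟨(hx3 j0).1, (hx3 j0).2⟩
          ⟨(hy3 j0).1, (hy3 j0).2⟩ h
      linarith
    · have hQ' : 2 * (∑ j : ι, (w j / 2) * (m.2.2 j) ^ 2)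
          < (∑ j : ι, (w j / 2) * (x.2.2 j) ^ 2) + ∑ j : ι, (w j / 2) * (y.2.2 j) ^ 2 := by
        rw [Finset.mul_sum, ← Finset.sum_add_distrib]
        refine Finset.sum_lt_sum (fun j _ => hQterm j) ⟨j0, Finset.mem_univ _, ?_⟩
        have hsub : x.2.2 j0 - y.2.2 j0 ≠ 0 := sub_ne_zero.mpr h
        have h1 : (0:ℝ) < (x.2.2 j0 - y.2.2 j0) ^ 2 := by positivity
        have h2 := hw j0
        show 2 * ((w j0 / 2) * ((x.2.2 j0 + y.2.2 j0) / 2) ^ 2) < _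
        nlinarith
      linarith
  linarith [hfx, hfy, hstrict]
end

section
/- Suppose N is nonempty, g and each c_j are continuous on ℝ, and the GFC feasible set K is nonempty. Then the GFC objective f attains its minimum over K: there exists (s*, d*, ω*) ∈ K such that f(s*, d*, ω*) ≤ f(s, d, ω) for every (s, d, ω) ∈ K. -/
open Finset

/-- if the bus set is nonempty, `g` and each `c_j` are continuous, and the
GFC feasible set is nonempty, then the GFC objective attains its minimum over the
feasible set. -/
theorem gfc_minimum_attained {ι : Type*} [Fintype ι] [Nonempty ι] (D : Finset ι)
    (w p a lo hi : ι → ℝ) (b : ℝ) (c : ι → ℝ → ℝ) (g : ℝ → ℝ)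
    (hw : ∀ j : ι, 0 < w j) (ha : ∀ j ∈ D, 0 < a j) (hlohi : ∀ j ∈ D, lo j ≤ hi j)
    (hg : Continuous g) (hc : ∀ j ∈ D, Continuous (c j))
    (hK : (gfcK D w p a lo hi b).Nonempty) :
    ∃ x ∈ gfcK D w p a lo hi b,
      ∀ y ∈ gfcK D w p a lo hi b, gfcF D w c g x ≤ gfcF D w c g y := by
  classical
  obtain ⟨x0, hx0⟩ := hK
  set f := gfcF D w c g with hfdef
  -- continuity of f
  have hfcont : Continuous f := by
    rw [hfdef]
    unfold gfcF
    refine Continuous.add (Continuous.add (hg.comp continuous_fst) ?_) ?_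
    · exact continuous_finset_sum _ fun j _ =>
        (hc j.1 j.2).comp ((continuous_apply j).comp (continuous_fst.comp continuous_snd))
    · exact continuous_finset_sum _ fun j _ =>
        continuous_const.mul
          (((continuous_apply j).comp (continuous_snd.comp continuous_snd)).pow 2)
  -- closedness of K
  have hKclosed : IsClosed (gfcK D w p a lo hi b) := by
    have heq : gfcK D w p a lo hi b =
        {x : ℝ × ({j // j ∈ D} → ℝ) × (ι → ℝ) |
            x.1 = (∑ j : {j // j ∈ D}, a j.1 * x.2.1 j) - b} ∩
        ({x | (∑ j : ι, (p j - w j * x.2.2 j)) - (∑ j : {j // j ∈ D}, x.2.1 j) = 0} ∩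
          ⋂ j : {j // j ∈ D},
            ({x | lo j.1 ≤ x.2.1 j} ∩ {x | x.2.1 j ≤ hi j.1})) := by
      ext x
      simp only [gfcK, Set.mem_setOf_eq, Set.mem_inter_iff, Set.mem_iInter]
    rw [heq]
    refine IsClosed.inter ?_ (IsClosed.inter ?_ ?_)
    · exact isClosed_eq continuous_fst
        ((continuous_finset_sum _ fun j _ => continuous_const.mul
          ((continuous_apply j).comp (continuous_fst.comp continuous_snd))).sub continuous_const)
    · exact isClosed_eq
        (((continuous_finset_sum _ fun j _ =>
            (continuous_const.sub (continuous_const.mul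
              ((continuous_apply j).comp (continuous_snd.comp continuous_snd)))))).sub
          (continuous_finset_sum _ fun j _ =>
            (continuous_apply j).comp (continuous_fst.comp continuous_snd)))
        continuous_const
    · refine isClosed_iInter fun j => IsClosed.inter ?_ ?_
      · exact isClosed_le continuous_const
          ((continuous_apply j).comp (continuous_fst.comp continuous_snd))
      · exact isClosed_le
          ((continuous_apply j).comp (continuous_fst.comp continuous_snd)) continuous_const
  set M := f x0 with hMdef
  -- range of s
  set A := (∑ j : {j // j ∈ D}, a j.1 * lo j.1) - b with hAdef
  set B := (∑ j : {j // j ∈ D}, a j.1 * hi j.1) - b with hBdef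
  have hsrange : ∀ x ∈ gfcK D w p a lo hi b, x.1 ∈ Set.Icc A B := by
    intro x hx
    obtain ⟨hs, -, hbox⟩ := hx
    constructor
    · rw [hs, hAdef]
      refine sub_le_sub_right (Finset.sum_le_sum fun j _ => ?_) b
      exact mul_le_mul_of_nonneg_left (hbox j).1 (ha j.1 j.2).le
    · rw [hs, hBdef]
      refine sub_le_sub_right (Finset.sum_le_sum fun j _ => ?_) b
      exact mul_le_mul_of_nonneg_left (hbox j).2 (ha j.1 j.2).le
  -- lower bound for g on Icc A B
  obtain ⟨m1, hm1⟩ : ∃ m1, ∀ t ∈ Set.Icc A B, m1 ≤ g t := by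
    obtain ⟨m1, hm1⟩ := (isCompact_Icc.image hg).bddBelow
    exact ⟨m1, fun t ht => hm1 (Set.mem_image_of_mem g ht)⟩
  -- lower bounds for c j
  have hcb : ∀ j : {j // j ∈ D}, ∃ m, ∀ t ∈ Set.Icc (lo j.1) (hi j.1), m ≤ c j.1 t := by
    intro j
    obtain ⟨m, hm⟩ := (isCompact_Icc.image (hc j.1 j.2)).bddBelow
    exact ⟨m, fun t ht => hm (Set.mem_image_of_mem _ ht)⟩
  choose mc hmc using hcb
  set T := M - m1 - ∑ j : {j // j ∈ D}, mc j with hTdef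
  set R : ι → ℝ := fun j => Real.sqrt (2 * T / w j) with hRdef
  -- the sublevel set
  set S := gfcK D w p a lo hi b ∩ f ⁻¹' Set.Iic M with hSdef
  have hx0S : x0 ∈ S := ⟨hx0, le_refl M⟩
  -- bound on ω for x ∈ S
  have homega : ∀ x ∈ S, ∀ j : ι, x.2.2 j ∈ Set.Icc (-(R j)) (R j) := by
    intro x hxS j
    obtain ⟨hxK, hxM⟩ := hxS
    have hsum : ∑ k : {j // j ∈ D}, mc k ≤ ∑ k : {j // j ∈ D}, c k.1 (x.2.1 k) :=
      Finset.sum_le_sum fun k _ => hmc k _ ⟨(hxK.2.2 k).1, (hxK.2.2 k).2⟩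
    have hgb : m1 ≤ g x.1 := hm1 _ (hsrange x hxK)
    have hterm : (w j / 2) * (x.2.2 j) ^ 2 ≤ ∑ k : ι, (w k / 2) * (x.2.2 k) ^ 2 :=
      Finset.single_le_sum (f := fun k => (w k / 2) * (x.2.2 k) ^ 2) (fun k _ => mul_nonneg (by linarith [hw k]) (sq_nonneg _)) (Finset.mem_univ j)
    have hquad : (w j / 2) * (x.2.2 j) ^ 2 ≤ T := by
      have hfx : f x ≤ M := hxM
      have : g x.1 + (∑ k : {j // j ∈ D}, c k.1 (x.2.1 k)) +
          ∑ k : ι, (w k / 2) * (x.2.2 k) ^ 2 ≤ M := hfx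
      rw [hTdef]
      linarith
    have hsq : (x.2.2 j) ^ 2 ≤ 2 * T / w j := by
      rw [le_div_iff₀ (hw j)]
      nlinarith [hw j]
    have : |x.2.2 j| ≤ R j := by
      rw [hRdef]
      calc |x.2.2 j| = Real.sqrt ((x.2.2 j) ^ 2) := (Real.sqrt_sq_eq_abs _).symm
        _ ≤ Real.sqrt (2 * T / w j) := Real.sqrt_le_sqrt hsq
    exact abs_le.mp this
  -- S is compact
  have hScompact : IsCompact S := by
    have hCcompact : IsCompact (Set.Icc A B ×ˢ
        ((Set.univ.pi fun j : {j // j ∈ D} => Set.Icc (lo j.1) (hi j.1)) ×ˢ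
         (Set.univ.pi fun j : ι => Set.Icc (-(R j)) (R j)))) :=
      isCompact_Icc.prod
        ((isCompact_univ_pi fun _ => isCompact_Icc).prod
         (isCompact_univ_pi fun _ => isCompact_Icc))
    refine hCcompact.of_isClosed_subset
      (hKclosed.inter (IsClosed.preimage hfcont isClosed_Iic)) ?_
    rintro x hxS
    refine ⟨hsrange x hxS.1, fun j _ => ⟨(hxS.1.2.2 j).1, (hxS.1.2.2 j).2⟩,
      fun j _ => homega x hxS j⟩
  -- extract minimizer
  obtain ⟨x, hxS, hxmin⟩ := hScompact.exists_isMinOn ⟨x0, hx0S⟩ hfcont.continuousOn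
  refine ⟨x, hxS.1, fun y hy => ?_⟩
  rcases le_or_gt (f y) M with hyM | hyM
  · exact hxmin ⟨hy, hyM⟩
  · have : f x ≤ M := hxmin hx0S
    linarith
end

section
/- Let θ_j, ω_j, d_j : ℝ → ℝ for each j ∈ N, and fix t₀ ∈ ℝ. Assume: (i) each θ_j is differentiable with θ_j'(τ) = ω_j(τ) for all τ, and each ω_j is continuous; (ii) each ω_j is differentiable at t₀ with M_j ω_j'(t₀) = p_j − (D_j + 1/R_j) ω_j(t₀) − d_j(t₀) − F_j(θ(t₀)); (iii) the equilibrium relations F_j(θ*) = p_j − (D_j + 1/R_j) ω* − d*_j hold for every j ∈ N. Define V(τ) = (1/2) Σ_{j∈N} M_j (ω_j(τ) − ω*)² + Σ_{(i,j)∈E} ∫_{θ*_i − θ*_j}^{θ_i(τ) − θ_j(τ)} Y_{ij} (sin u − sin(θ*_i − θ*_j)) du. Then V is differentiable at t₀ and V'(t₀) = − Σ_{j∈N} (ω_j(t₀) − ω*) (d_j(t₀) − d*_j) − Σ_{j∈N} (D_j + 1/R_j) (ω_j(t₀) − ω*)². -/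
open Finset Real

/-- The net power outflow at bus `j`:
`F_j(θ) = ∑_{k : (j,k) ∈ E} Y_{jk} sin(θ_j - θ_k) - ∑_{i : (i,j) ∈ E} Y_{ij} sin(θ_i - θ_j)`. -/
noncomputable def netFlow {ι : Type*} [Fintype ι] [DecidableEq ι]
    (E : Finset (ι × ι)) (Y : ι × ι → ℝ) (θ : ι → ℝ) (j : ι) : ℝ :=
  (∑ e ∈ E.filter (fun e => e.1 = j), Y e * Real.sin (θ e.1 - θ e.2))
    - ∑ e ∈ E.filter (fun e => e.2 = j), Y e * Real.sin (θ e.1 - θ e.2)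

/-- Summing `c j * netFlow j` over all buses regroups over the edges. -/
lemma sum_mul_netFlow {ι : Type*} [Fintype ι] [DecidableEq ι]
    (E : Finset (ι × ι)) (Y : ι × ι → ℝ) (x c : ι → ℝ) :
    ∑ j, c j * netFlow E Y x j
      = ∑ e ∈ E, Y e * Real.sin (x e.1 - x e.2) * (c e.1 - c e.2) := by
  unfold netFlow
  have h1 : ∀ j : ι, c j * ((∑ e ∈ E.filter (fun e => e.1 = j), Y e * Real.sin (x e.1 - x e.2))
      - ∑ e ∈ E.filter (fun e => e.2 = j), Y e * Real.sin (x e.1 - x e.2))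
      = (∑ e ∈ E.filter (fun e => e.1 = j), c e.1 * (Y e * Real.sin (x e.1 - x e.2)))
      - ∑ e ∈ E.filter (fun e => e.2 = j), c e.2 * (Y e * Real.sin (x e.1 - x e.2)) := by
    intro j
    rw [mul_sub, Finset.mul_sum, Finset.mul_sum]
    congr 1
    · exact Finset.sum_congr rfl fun e he => by rw [(Finset.mem_filter.mp he).2]
    · exact Finset.sum_congr rfl fun e he => by rw [(Finset.mem_filter.mp he).2]
  simp only [h1]
  rw [Finset.sum_sub_distrib, Finset.sum_fiberwise E (fun e => e.1),
    Finset.sum_fiberwise E (fun e => e.2), ← Finset.sum_sub_distrib]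
  exact Finset.sum_congr rfl fun e _ => by ring

/-- along trajectories of the swing dynamics
`M_j ω_j'(t₀) = p_j - (D_j + 1/R_j) ω_j(t₀) - d_j(t₀) - F_j(θ(t₀))`, with `θ_j' = ω_j`,
and equilibrium relations `F_j(θ*) = p_j - (D_j + 1/R_j) ω* - d*_j`, the Lyapunov energy
`V(τ) = (1/2) ∑_j M_j (ω_j(τ) - ω*)² + ∑_{(i,j)∈E} ∫_{θ*_i-θ*_j}^{θ_i(τ)-θ_j(τ)} Y_{ij}(sin u - sin(θ*_i-θ*_j)) du`
is differentiable at `t₀` with derivative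
`-∑_j (ω_j(t₀) - ω*)(d_j(t₀) - d*_j) - ∑_j (D_j + 1/R_j)(ω_j(t₀) - ω*)²`. -/
theorem lyapunov_V23_deriv {ι : Type*} [Fintype ι] [DecidableEq ι]
    (E : Finset (ι × ι)) (hE : ∀ e ∈ E, e.1 ≠ e.2) (Y : ι × ι → ℝ)
    (M Dc R p dstar : ι → ℝ)
    (hM : ∀ j, 0 < M j) (hD : ∀ j, 0 < Dc j) (hR : ∀ j, 0 < R j)
    (θ ω d : ι → ℝ → ℝ) (θstar : ι → ℝ) (ωstar : ℝ) (t₀ : ℝ) (ωdot : ι → ℝ)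
    (hθ : ∀ j, ∀ τ, HasDerivAt (θ j) (ω j τ) τ)
    (hωc : ∀ j, Continuous (ω j))
    (hω : ∀ j, HasDerivAt (ω j) (ωdot j) t₀)
    (hswing : ∀ j, M j * ωdot j =
      p j - (Dc j + 1 / R j) * ω j t₀ - d j t₀ - netFlow E Y (fun k => θ k t₀) j)
    (heq : ∀ j, netFlow E Y θstar j = p j - (Dc j + 1 / R j) * ωstar - dstar j) :
    HasDerivAt (fun τ =>
        (1 / 2) * (∑ j, M j * (ω j τ - ωstar) ^ 2)
          + ∑ e ∈ E, ∫ u in (θstar e.1 - θstar e.2)..(θ e.1 τ - θ e.2 τ),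
              Y e * (Real.sin u - Real.sin (θstar e.1 - θstar e.2)))
      (-(∑ j, (ω j t₀ - ωstar) * (d j t₀ - dstar j))
        - ∑ j, (Dc j + 1 / R j) * (ω j t₀ - ωstar) ^ 2) t₀ := by
  -- derivative of the kinetic part
  have h1 : HasDerivAt (fun τ => (1 / 2) * (∑ j, M j * (ω j τ - ωstar) ^ 2))
      (∑ j : ι, (ω j t₀ - ωstar) * (M j * ωdot j)) t₀ := by
    have : HasDerivAt (fun τ => ∑ j, M j * (ω j τ - ωstar) ^ 2)
        (∑ j : ι, M j * (2 * (ω j t₀ - ωstar) ^ 1 * ωdot j)) t₀ := by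
      apply HasDerivAt.fun_sum
      intro j _
      exact (((hω j).sub_const ωstar).pow 2).const_mul (M j)
    have h' := this.const_mul (1 / 2 : ℝ)
    convert h' using 1
    · rfl
    · rfl
    rw [Finset.mul_sum]
    exact Finset.sum_congr rfl fun j _ => by ring
  -- derivative of the potential part
  have h2 : HasDerivAt (fun τ => ∑ e ∈ E, ∫ u in (θstar e.1 - θstar e.2)..(θ e.1 τ - θ e.2 τ),
        Y e * (Real.sin u - Real.sin (θstar e.1 - θstar e.2)))
      (∑ e ∈ E, Y e * (Real.sin (θ e.1 t₀ - θ e.2 t₀) - Real.sin (θstar e.1 - θstar e.2))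
        * (ω e.1 t₀ - ω e.2 t₀)) t₀ := by
    apply HasDerivAt.fun_sum
    intro e _
    have hf : Continuous (fun u => Y e * (Real.sin u - Real.sin (θstar e.1 - θstar e.2))) := by
      fun_prop
    have houter : HasDerivAt
        (fun y => ∫ u in (θstar e.1 - θstar e.2)..y,
          Y e * (Real.sin u - Real.sin (θstar e.1 - θstar e.2)))
        (Y e * (Real.sin (θ e.1 t₀ - θ e.2 t₀) - Real.sin (θstar e.1 - θstar e.2)))
        (θ e.1 t₀ - θ e.2 t₀) :=
      intervalIntegral.integral_hasDerivAt_right (hf.intervalIntegrable _ _)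
        (hf.stronglyMeasurableAtFilter _ _) hf.continuousAt
    have hinner : HasDerivAt (fun τ => θ e.1 τ - θ e.2 τ) (ω e.1 t₀ - ω e.2 t₀) t₀ :=
      (hθ e.1 t₀).sub (hθ e.2 t₀)
    exact houter.comp t₀ hinner
  have h := h1.add h2
  convert h using 1
  · rfl
  · rfl
  · rfl
  -- algebraic identity for the derivative value
  have key : ∀ x : ι → ℝ, ∑ j, (ω j t₀ - ωstar) * netFlow E Y x j
      = ∑ e ∈ E, Y e * Real.sin (x e.1 - x e.2) * (ω e.1 t₀ - ω e.2 t₀) := by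
    intro x
    rw [sum_mul_netFlow E Y x (fun j => ω j t₀ - ωstar)]
    exact Finset.sum_congr rfl fun e _ => by ring
  have hsub : ∑ j : ι, (ω j t₀ - ωstar) * (M j * ωdot j)
      = (∑ j, (ω j t₀ - ωstar) * netFlow E Y θstar j)
        - (∑ j, (ω j t₀ - ωstar) * netFlow E Y (fun k => θ k t₀) j)
        + (-(∑ j, (ω j t₀ - ωstar) * (d j t₀ - dstar j))
          - ∑ j, (Dc j + 1 / R j) * (ω j t₀ - ωstar) ^ 2) := by
    have : ∑ j : ι, (ω j t₀ - ωstar) * (M j * ωdot j)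
        = ∑ j : ι, ((ω j t₀ - ωstar) * netFlow E Y θstar j
            - (ω j t₀ - ωstar) * netFlow E Y (fun k => θ k t₀) j
            + (-((ω j t₀ - ωstar) * (d j t₀ - dstar j))
              - (Dc j + 1 / R j) * (ω j t₀ - ωstar) ^ 2)) := by
      apply Finset.sum_congr rfl
      intro j _
      rw [hswing j, heq j]
      ring
    rw [this, Finset.sum_add_distrib, Finset.sum_sub_distrib, Finset.sum_sub_distrib,
      Finset.sum_neg_distrib]
  have key2 : ∑ j, (ω j t₀ - ωstar) * netFlow E Y (fun k => θ k t₀) j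
      = ∑ e ∈ E, Y e * Real.sin (θ e.1 t₀ - θ e.2 t₀) * (ω e.1 t₀ - ω e.2 t₀) := by
    rw [sum_mul_netFlow E Y (fun k => θ k t₀) (fun j => ω j t₀ - ωstar)]
    exact Finset.sum_congr rfl fun e _ => by ring
  rw [key θstar, key2] at hsub
  have hE0 : (∑ e ∈ E, Y e * Real.sin (θstar e.1 - θstar e.2) * (ω e.1 t₀ - ω e.2 t₀))
      - (∑ e ∈ E, Y e * Real.sin (θ e.1 t₀ - θ e.2 t₀) * (ω e.1 t₀ - ω e.2 t₀))
      + ∑ e ∈ E, Y e * (Real.sin (θ e.1 t₀ - θ e.2 t₀) - Real.sin (θstar e.1 - θstar e.2))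
          * (ω e.1 t₀ - ω e.2 t₀) = 0 := by
    rw [← Finset.sum_sub_distrib, ← Finset.sum_add_distrib]
    exact Finset.sum_eq_zero fun e _ => by ring
  linarith [hsub, hE0]
end

section
/- Let β > 0, M_j > 0 for each j ∈ N, and Y_{ij} > 0 for each (i, j) ∈ E. Let μ, μ* ∈ ℝ and ω, ω*, θ, θ* : N → ℝ be such that |θ_i − θ_j| ≤ π/2 and |θ*_i − θ*_j| ≤ π/2 for every (i, j) ∈ E. Then the Lyapunov energy V := (1/(2β)) (μ − μ*)² + (1/2) Σ_{j∈N} M_j (ω_j − ω*_j)² + Σ_{(i,j)∈E} ∫_{θ*_i − θ*_j}^{θ_i − θ_j} Y_{ij} (sin u − sin(θ*_i − θ*_j)) du satisfies V ≥ 0, and V = 0 if and only if μ = μ*, ω_j = ω*_j for all j ∈ N, and θ_i − θ_j = θ*_i − θ*_j for all (i, j) ∈ E. -/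
open Finset Real

lemma key_int (a b : ℝ) (ha : |a| ≤ π/2) (hb : |b| ≤ π/2) :
    0 ≤ (∫ u in a..b, (Real.sin u - Real.sin a)) ∧
      ((∫ u in a..b, (Real.sin u - Real.sin a)) = 0 ↔ b = a) := by
  rw [abs_le] at ha hb
  have hcont : ∀ c d : ℝ, IntervalIntegrable (fun u => Real.sin u - Real.sin a) MeasureTheory.volume c d :=
    fun c d => (Real.continuous_sin.sub continuous_const).intervalIntegrable c d
  have hmono := Real.strictMonoOn_sin
  rcases lt_trichotomy a b with h | h | h
  · have hpos : 0 < ∫ u in a..b, (Real.sin u - Real.sin a) := by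
      apply intervalIntegral.intervalIntegral_pos_of_pos_on (hcont a b) _ h
      intro x hx
      have hxm : x ∈ Set.Icc (-(π/2)) (π/2) :=
        ⟨le_trans ha.1 hx.1.le, le_trans hx.2.le hb.2⟩
      have := hmono ⟨ha.1, ha.2⟩ hxm hx.1
      linarith
    exact ⟨hpos.le, by constructor <;> intro hh <;> [linarith; linarith [hh ▸ h]]⟩
  · subst h; simp
  · have hpos : 0 < ∫ u in b..a, (Real.sin a - Real.sin u) := by
      apply intervalIntegral.intervalIntegral_pos_of_pos_on
        ((continuous_const.sub Real.continuous_sin).intervalIntegrable b a) _ h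
      intro x hx
      have hxm : x ∈ Set.Icc (-(π/2)) (π/2) :=
        ⟨le_trans hb.1 hx.1.le, le_trans hx.2.le ha.2⟩
      have := hmono hxm ⟨ha.1, ha.2⟩ hx.2
      show 0 < Real.sin a - Real.sin x
      linarith
    have heq : (∫ u in a..b, (Real.sin u - Real.sin a)) = ∫ u in b..a, (Real.sin a - Real.sin u) := by
      rw [intervalIntegral.integral_symm, ← intervalIntegral.integral_neg]
      congr 1; ext u; ring
    rw [heq]
    exact ⟨hpos.le, by constructor <;> intro hh <;> [linarith; linarith [hh ▸ h]]⟩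

/-- the Lyapunov energy
`V = (1/(2β))(μ - μ*)² + (1/2) ∑_j M_j (ω_j - ω*_j)²
   + ∑_{(i,j)∈E} ∫_{θ*_i-θ*_j}^{θ_i-θ_j} Y_{ij} (sin u - sin(θ*_i-θ*_j)) du`
is nonnegative when all phase-angle differences across lines lie in `[-π/2, π/2]`, and
it vanishes iff `μ = μ*`, `ω = ω*`, and all line angle differences agree with their
equilibrium values. -/
theorem lyapunov_energy_nonneg {ι : Type*} [Fintype ι]
    (E : Finset (ι × ι)) (hE : ∀ e ∈ E, e.1 ≠ e.2)
    (Y : ι × ι → ℝ) (hY : ∀ e ∈ E, 0 < Y e)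
    (M : ι → ℝ) (hM : ∀ j, 0 < M j)
    (β : ℝ) (hβ : 0 < β) (μ μstar : ℝ) (ω ωstar θ θstar : ι → ℝ)
    (hθ : ∀ e ∈ E, |θ e.1 - θ e.2| ≤ π / 2)
    (hθstar : ∀ e ∈ E, |θstar e.1 - θstar e.2| ≤ π / 2) :
    0 ≤ (1 / (2 * β)) * (μ - μstar) ^ 2
        + (1 / 2) * (∑ j, M j * (ω j - ωstar j) ^ 2)
        + ∑ e ∈ E, ∫ u in (θstar e.1 - θstar e.2)..(θ e.1 - θ e.2),
            Y e * (Real.sin u - Real.sin (θstar e.1 - θstar e.2)) ∧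
      (((1 / (2 * β)) * (μ - μstar) ^ 2
          + (1 / 2) * (∑ j, M j * (ω j - ωstar j) ^ 2)
          + ∑ e ∈ E, ∫ u in (θstar e.1 - θstar e.2)..(θ e.1 - θ e.2),
              Y e * (Real.sin u - Real.sin (θstar e.1 - θstar e.2))) = 0 ↔
        (μ = μstar ∧ (∀ j, ω j = ωstar j) ∧
          ∀ e ∈ E, θ e.1 - θ e.2 = θstar e.1 - θstar e.2)) := by
  -- rewrite each summand pulling out Y e
  have hterm : ∀ e ∈ E,
      (∫ u in (θstar e.1 - θstar e.2)..(θ e.1 - θ e.2),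
        Y e * (Real.sin u - Real.sin (θstar e.1 - θstar e.2)))
      = Y e * ∫ u in (θstar e.1 - θstar e.2)..(θ e.1 - θ e.2),
          (Real.sin u - Real.sin (θstar e.1 - θstar e.2)) := by
    intro e _; exact intervalIntegral.integral_const_mul _ _
  have hkey : ∀ e ∈ E,
      0 ≤ (∫ u in (θstar e.1 - θstar e.2)..(θ e.1 - θ e.2),
            (Real.sin u - Real.sin (θstar e.1 - θstar e.2))) ∧
        ((∫ u in (θstar e.1 - θstar e.2)..(θ e.1 - θ e.2),
            (Real.sin u - Real.sin (θstar e.1 - θstar e.2))) = 0 ↔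
          θ e.1 - θ e.2 = θstar e.1 - θstar e.2) :=
    fun e he => key_int _ _ (hθstar e he) (hθ e he)
  have hA : 0 ≤ (1 / (2 * β)) * (μ - μstar) ^ 2 :=
    mul_nonneg (by positivity) (sq_nonneg _)
  have hBj : ∀ j ∈ univ, 0 ≤ M j * (ω j - ωstar j) ^ 2 :=
    fun j _ => mul_nonneg (hM j).le (sq_nonneg _)
  have hB : 0 ≤ (1 / 2 : ℝ) * (∑ j, M j * (ω j - ωstar j) ^ 2) :=
    mul_nonneg (by norm_num) (Finset.sum_nonneg hBj)
  have hCe : ∀ e ∈ E, 0 ≤ ∫ u in (θstar e.1 - θstar e.2)..(θ e.1 - θ e.2),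
      Y e * (Real.sin u - Real.sin (θstar e.1 - θstar e.2)) := by
    intro e he
    rw [hterm e he]
    exact mul_nonneg (hY e he).le (hkey e he).1
  have hC : 0 ≤ ∑ e ∈ E, ∫ u in (θstar e.1 - θstar e.2)..(θ e.1 - θ e.2),
      Y e * (Real.sin u - Real.sin (θstar e.1 - θstar e.2)) := Finset.sum_nonneg hCe
  refine ⟨by linarith, ?_⟩
  constructor
  · intro h0
    have hA0 : (1 / (2 * β)) * (μ - μstar) ^ 2 = 0 := by linarith
    have hB0 : (1 / 2 : ℝ) * (∑ j, M j * (ω j - ωstar j) ^ 2) = 0 := by linarith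
    have hC0 : (∑ e ∈ E, ∫ u in (θstar e.1 - θstar e.2)..(θ e.1 - θ e.2),
        Y e * (Real.sin u - Real.sin (θstar e.1 - θstar e.2))) = 0 := by linarith
    refine ⟨?_, ?_, ?_⟩
    · have : (μ - μstar) ^ 2 = 0 := by
        have h2β : (1 / (2 * β)) ≠ 0 := by positivity
        exact (mul_eq_zero.mp hA0).resolve_left h2β
      have := pow_eq_zero_iff two_ne_zero |>.mp this
      linarith [sub_eq_zero.mp this]
    · intro j
      have hsum0 : (∑ j, M j * (ω j - ωstar j) ^ 2) = 0 := by linarith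
      have := (Finset.sum_eq_zero_iff_of_nonneg hBj).mp hsum0 j (mem_univ j)
      have h2 : (ω j - ωstar j) ^ 2 = 0 :=
        (mul_eq_zero.mp this).resolve_left (hM j).ne'
      have := pow_eq_zero_iff two_ne_zero |>.mp h2
      linarith [sub_eq_zero.mp this]
    · intro e he
      have := (Finset.sum_eq_zero_iff_of_nonneg hCe).mp hC0 e he
      rw [hterm e he] at this
      have hI0 := (mul_eq_zero.mp this).resolve_left (hY e he).ne'
      exact (hkey e he).2.mp hI0
  · rintro ⟨h1, h2, h3⟩
    have hA0 : (1 / (2 * β)) * (μ - μstar) ^ 2 = 0 := by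
      rw [h1]; ring
    have hB0 : (∑ j, M j * (ω j - ωstar j) ^ 2) = 0 := by
      apply Finset.sum_eq_zero; intro j _; rw [h2 j]; ring
    have hC0 : (∑ e ∈ E, ∫ u in (θstar e.1 - θstar e.2)..(θ e.1 - θ e.2),
        Y e * (Real.sin u - Real.sin (θstar e.1 - θstar e.2))) = 0 := by
      apply Finset.sum_eq_zero; intro e he
      rw [hterm e he, (hkey e he).2.mpr (h3 e he)]; ring
    rw [hA0, hB0, hC0]; ring
end
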